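/- In the Markov-modulated setting with P_π(A_1=0)=0 and P_π(B_1=0)<1, fix i∈S and suppose P_i(|A_1^i|=1)=1. Then the degeneracy condition (D) holds if and only if P_i(B̂_1^i=0)=1, where B̂_1^i=∑_{k=1}^{τ̂(i)}Π_{k-1}B_k is the additive component accumulated up to the first time τ̂(i) at which the chain is in state i with Π equal to 1. -/

import Mathlib

open MeasureTheory ProbabilityTheory Filter
open scoped ENNReal NNReal Topology

noncomputable section

namespace Perpetuities

/-- The positive part of the logarithm, with the convention `log⁺ 0 = 0`. -/
def logplus (x : ℝ) : ℝ := max (Real.log x) 0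

/-- Weak convergence of a sequence of (probability) measures on `ℝ`. -/
def WeakLim (μ : ℕ → Measure ℝ) (ν : Measure ℝ) : Prop :=
  ∀ f : BoundedContinuousFunction ℝ ℝ,
    Tendsto (fun n => ∫ x, f x ∂ μ n) atTop (nhds (∫ x, f x ∂ ν))

/-- `|f n| → ∞` in `μ`-probability. -/
def TendstoInfInMeasure {Ω : Type*} [MeasurableSpace Ω] (μ : Measure Ω) (f : ℕ → Ω → ℝ) : Prop :=
  ∀ x : ℝ, 0 < x → Tendsto (fun n => μ {ω | |f n ω| ≤ x}) atTop (nhds 0)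

/-- `d` is the lattice span (period) of the distribution of the `ℕ`-valued random
variable `T` under `μ`, i.e. `d` is the greatest common divisor of the support. -/
def LatticeSpan {Ω : Type*} [MeasurableSpace Ω] (μ : Measure Ω) (T : Ω → ℕ) (d : ℕ) : Prop :=
  (∀ n, 0 < μ {ω | T ω = n} → d ∣ n) ∧ ∀ e : ℕ, (∀ n, 0 < μ {ω | T ω = n} → e ∣ n) → e ∣ d

/-- The Markov-modulated setting: an ergodic (irreducible, aperiodic, positive recurrent)
Markov chain `M` on a countable state space `S` with transition matrix `p` and stationary
distribution `π`, modulating a sequence `(A_n, B_n)_{n ≥ 1}` of real random pairs (indexed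
here so that `A n`, `B n` are the paper's `A_{n+1}`, `B_{n+1}`): conditionally on the whole
path of the chain, the pairs are independent and the conditional law of `(A_{n+1}, B_{n+1})`
given the path depends only on `(M_n, M_{n+1})`, via the stochastic kernel `K`.
`P i` is the underlying probability measure conditioned on `M 0 = i`. -/
structure MMSetting (S : Type*) (Ω : Type*) [MeasurableSpace S] [MeasurableSingletonClass S]
    [Countable S] [MeasurableSpace Ω] where
  P : S → Measure Ω
  prob : ∀ i, IsProbabilityMeasure (P i)
  π : S → ℝ≥0∞
  πsum : ∑' i, π i = 1
  πpos : ∀ i, 0 < π i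
  p : S → S → ℝ≥0∞
  psum : ∀ i, ∑' j, p i j = 1
  stationary : ∀ j, ∑' i, π i * p i j = π j
  K : S → S → Measure (ℝ × ℝ)
  Kprob : ∀ i j, IsProbabilityMeasure (K i j)
  M : ℕ → Ω → S
  A : ℕ → Ω → ℝ
  B : ℕ → Ω → ℝ
  measM : ∀ n, Measurable (M n)
  measA : ∀ n, Measurable (A n)
  measB : ∀ n, Measurable (B n)
  start : ∀ i, P i {ω | M 0 ω = i} = 1
  chain : ∀ (i : S) (n : ℕ) (path : ℕ → S), path 0 = i →
    P i (⋂ k ∈ Finset.range (n + 1), {ω | M k ω = path k})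
      = ∏ k ∈ Finset.range n, p (path k) (path (k + 1))
  modulated : ∀ (i : S) (n : ℕ) (path : ℕ → S) (E : ℕ → Set (ℝ × ℝ)), path 0 = i →
    (∀ k, MeasurableSet (E k)) →
    P i ((⋂ k ∈ Finset.range (n + 1), {ω | M k ω = path k}) ∩
        ⋂ k ∈ Finset.range n, {ω | (A k ω, B k ω) ∈ E k})
      = P i (⋂ k ∈ Finset.range (n + 1), {ω | M k ω = path k})
        * ∏ k ∈ Finset.range n, K (path k) (path (k + 1)) (E k)
  irreducible : ∀ i j, ∃ n, 0 < P i {ω | M n ω = j}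
  recurrent : ∀ i, P i {ω | ∃ n, 0 < n ∧ M n ω = i} = 1
  posRecurrent : ∀ i, ∫⁻ ω, ((sInf {n | 0 < n ∧ M n ω = i} : ℕ) : ℝ≥0∞) ∂ P i < ⊤
  aperiodic : ∀ (i : S) (d : ℕ), (∀ n, 0 < n → 0 < P i {ω | M n ω = i} → d ∣ n) → d = 1

section PathAppend

variable {S : Type*} {γ δ : ℕ → S} {g : ℕ}

def pathAppend (γ : ℕ → S) (g : ℕ) (δ : ℕ → S) (k : ℕ) : S := if k < g then γ k else δ (k - g)

lemma pathAppend_of_le (h : δ 0 = γ g) {k : ℕ} (hk : k ≤ g) : pathAppend γ g δ k = γ k := by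
  rcases hk.lt_or_eq with hk | rfl
  · simp [pathAppend, hk]
  · simp [pathAppend, h]

lemma pathAppend_add (γ : ℕ → S) (g : ℕ) (δ : ℕ → S) (k : ℕ) :
    pathAppend γ g δ (g + k) = δ k := by
  simp [pathAppend]

def edge (a b : S) (k : ℕ) : S := if k = 0 then a else b

end PathAppend

namespace MMSetting

variable {S : Type*} [MeasurableSpace S] [MeasurableSingletonClass S] [Countable S]
variable {Ω : Type*} [MeasurableSpace Ω]
variable (X : MMSetting S Ω)

/-- `Pπ = ∑ i, π i • P i`, the stationary (unconditional) probability measure. -/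
def Pπ : Measure Ω := Measure.sum fun i => X.π i • X.P i

/-- `Pprod n = Π_n = A_1 ⋯ A_n`, with `Π_0 = 1`. -/
def Pprod (n : ℕ) (ω : Ω) : ℝ := ∏ k ∈ Finset.range n, X.A k ω

/-- `Ssum n = ∑_{k=1}^n Π_{k-1} B_k`, the value `Ψ_1 ∘ ⋯ ∘ Ψ_n (0)` of the backward
iteration started at `0`. -/
def Ssum (n : ℕ) (ω : Ω) : ℝ := ∑ k ∈ Finset.range n, X.Pprod k ω * X.B k ω

/-- `Zb Z n = Ψ_1 ∘ ⋯ ∘ Ψ_n (Z) = Π_n Z + ∑_{k=1}^n Π_{k-1} B_k`, the backward iteration. -/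
def Zb (Z : Ω → ℝ) (n : ℕ) (ω : Ω) : ℝ := X.Pprod n ω * Z ω + X.Ssum n ω

/-- `Zf Z n = Ψ_n ∘ ⋯ ∘ Ψ_1 (Z)`, the forward iteration. -/
def Zf (Z : Ω → ℝ) : ℕ → Ω → ℝ
  | 0 => Z
  | n + 1 => fun ω => X.A n ω * Zf Z n ω + X.B n ω

/-- The perpetuity `Z_∞ = ∑_{n ≥ 1} Π_{n-1} B_n`. -/
def Zinf (ω : Ω) : ℝ := ∑' n, X.Pprod n ω * X.B n ω

/-- `tau i n = τ_n(i)`, the `n`-th return time of the driving chain to the state `i`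
(`τ_0(i) = 0`). -/
def tau (i : S) : ℕ → Ω → ℕ
  | 0 => fun _ => 0
  | n + 1 => fun ω => sInf {k | tau i n ω < k ∧ X.M k ω = i}

/-- `A_1^i = Π_{τ(i)}`. -/
def Ai (i : S) (ω : Ω) : ℝ := X.Pprod (X.tau i 1 ω) ω

/-- `B_1^i = ∑_{k=1}^{τ(i)} Π_{k-1} B_k`. -/
def Bi (i : S) (ω : Ω) : ℝ := X.Ssum (X.tau i 1 ω) ω

/-- `W^i = max_{1 ≤ k ≤ τ(i)} |Π_{k-1} B_k|`. -/
def Wi (i : S) (ω : Ω) : ℝ :=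
  (((Finset.range (X.tau i 1 ω)).sup fun k => ‖X.Pprod k ω * X.B k ω‖₊ : ℝ≥0) : ℝ)

/-- `S_{τ(i)} = - log |Π_{τ(i)}|`. -/
def Stau (i : S) (ω : Ω) : ℝ := - Real.log |X.Ai i ω|

/-- The function `J_i`: `J_i(0) = 1`, and for `x > 0`, `J_i(x) = x / E_i (S_{τ(i)}⁺ ∧ x)`
if `P_i(S_{τ(i)} ≤ 0) < 1`, and `J_i(x) = x` otherwise. -/
def Ji (i : S) (x : ℝ) : ℝ :=
  if x = 0 then 1
  else if X.P i {ω | X.Stau i ω ≤ 0} < 1 then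
    x / ∫ ω, min (max (X.Stau i ω) 0) x ∂ X.P i
  else x

/-- `τ̂(i) = inf {k ≥ 1 : M_k = i, Π_k = 1}`. -/
def hatτ (i : S) (ω : Ω) : ℕ := sInf {k | 0 < k ∧ X.M k ω = i ∧ X.Pprod k ω = 1}

/-- `Z` is an admissible initial value: it is (conditionally on `M 0`, i.e. under each `P i`)
independent of the modulated sequence `(M_n, A_n, B_n)_{n ≥ 1}`. -/
def Admissible (Z : Ω → ℝ) : Prop :=
  Measurable Z ∧
    ∀ i : S, IndepFun Z (fun ω => fun n : ℕ => (X.M (n + 1) ω, X.A n ω, X.B n ω)) (X.P i)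

/-- The degeneracy condition: `A_1 c_{M_1} + B_1 = c_{M_0}` a.s. for the family `c`. -/
def DegenD (c : S → ℝ) : Prop :=
  ∀ᵐ ω ∂ X.Pπ, X.A 0 ω * c (X.M 1 ω) + X.B 0 ω = c (X.M 0 ω)

/-- The dual degeneracy condition: `A_1 c_{M_0} + B_1 = c_{M_1}` a.s. for the family `c`. -/
def DegenDdual (c : S → ℝ) : Prop :=
  ∀ᵐ ω ∂ X.Pπ, X.A 0 ω * c (X.M 0 ω) + X.B 0 ω = c (X.M 1 ω)

end MMSetting

end Perpetuities

/-!
Write `ψ_n x = A_n x + B_n`, so that `Π_n x + ∑_{k ≤ n} Π_{k-1} B_k = ψ_1 ∘ ⋯ ∘ ψ_n (x)`.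
Condition (D) says that every step maps `c_{M_n}` to `c_{M_{n-1}}`. Composing up to `τ̂(i)`, where
the composed map goes from `i` back to `i` with slope `1`, gives `B̂_1^i = c_i - c_i = 0`.

Conversely, on the event that the chain follows a fixed path, the law of `(A_k, B_k)_{k < n}` is
the product of the kernels `K` along the path, so everything can be computed path by path. Along a
first-return loop at `i` the composed map is `x ↦ ±x + β`. If `B̂_1^i = 0`, the loops with slope `1`
are the identity, and concatenating two loops with slope `-1` shows that all of them share one
`β = b`; hence every loop at `i` fixes `c_i = b / 2`. Since the slopes do not vanish, closing paths
from `i` to `j` by a fixed path back to `i` yields a `c_j` that every path from `i` to `j` maps to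
`c_i`. Comparing a path to `a` with its extension by a step `a → b` gives `A c_b + B = c_a` under
`K(a, b)`, which is (D).
-/

namespace Perpetuities

section AffineWords

/- `affComp w n x = ψ_{w 0} ∘ ⋯ ∘ ψ_{w (n-1)} (x)` for the affine maps `ψ_{(a, b)} x = a * x + b`,
with slope `affProd w n` and intercept `affSum w n`. -/
def affProd (w : ℕ → ℝ × ℝ) (n : ℕ) : ℝ := ∏ k ∈ Finset.range n, (w k).1

def affSum (w : ℕ → ℝ × ℝ) (n : ℕ) : ℝ := ∑ k ∈ Finset.range n, affProd w k * (w k).2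

def affComp (w : ℕ → ℝ × ℝ) (n : ℕ) (x : ℝ) : ℝ := affProd w n * x + affSum w n

variable {w w' : ℕ → ℝ × ℝ} {n : ℕ}

@[simp] lemma affProd_zero (w : ℕ → ℝ × ℝ) : affProd w 0 = 1 := by simp [affProd]

@[simp] lemma affSum_zero (w : ℕ → ℝ × ℝ) : affSum w 0 = 0 := by simp [affSum]

@[simp] lemma affComp_zero (w : ℕ → ℝ × ℝ) (x : ℝ) : affComp w 0 x = x := by simp [affComp]

lemma affComp_zero_right (w : ℕ → ℝ × ℝ) (n : ℕ) : affComp w n 0 = affSum w n := by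
  simp [affComp]

lemma affProd_congr (h : ∀ k < n, w k = w' k) : affProd w n = affProd w' n :=
  Finset.prod_congr rfl fun k hk => by rw [h k (Finset.mem_range.mp hk)]

lemma affSum_congr (h : ∀ k < n, w k = w' k) : affSum w n = affSum w' n :=
  Finset.sum_congr rfl fun k hk => by
    have hk := Finset.mem_range.mp hk
    rw [h k hk, affProd_congr fun m hm => h m (hm.trans hk)]

lemma affComp_congr (h : ∀ k < n, w k = w' k) : affComp w n = affComp w' n := by
  ext x
  rw [affComp, affComp, affProd_congr h, affSum_congr h]

lemma affProd_add (w : ℕ → ℝ × ℝ) (a b : ℕ) :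
    affProd w (a + b) = affProd w a * affProd (fun k => w (a + k)) b :=
  Finset.prod_range_add _ a b

lemma affSum_add (w : ℕ → ℝ × ℝ) (a b : ℕ) :
    affSum w (a + b) = affSum w a + affProd w a * affSum (fun k => w (a + k)) b := by
  simp only [affSum, Finset.sum_range_add, Finset.mul_sum, affProd_add, mul_assoc]

lemma affComp_add (w : ℕ → ℝ × ℝ) (a b : ℕ) (x : ℝ) :
    affComp w (a + b) x = affComp w a (affComp (fun k => w (a + k)) b x) := by
  simp only [affComp, affProd_add, affSum_add]
  ring

lemma affComp_succ (w : ℕ → ℝ × ℝ) (n : ℕ) (x : ℝ) :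
    affComp w (n + 1) x = affComp w n ((w n).1 * x + (w n).2) := by
  rw [affComp_add]
  simp [affComp, affProd, affSum]

lemma affComp_injective (h : affProd w n ≠ 0) : Function.Injective (affComp w n) :=
  fun _ _ hxy => mul_left_cancel₀ h (add_right_cancel hxy)

def padVec {n : ℕ} (v : Fin n → ℝ × ℝ) (k : ℕ) : ℝ × ℝ := if h : k < n then v ⟨k, h⟩ else (1, 0)

variable {a b : ℕ}

lemma padVec_append_of_lt (x : Fin a → ℝ × ℝ) (y : Fin b → ℝ × ℝ) {k : ℕ} (hk : k < a) :
    padVec (Fin.append x y) k = padVec x k := by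
  have hk' : k < a + b := hk.trans_le (Nat.le_add_right a b)
  simp only [padVec, dif_pos hk, dif_pos hk']
  exact Fin.append_left x y ⟨k, hk⟩

lemma padVec_append_add (x : Fin a → ℝ × ℝ) (y : Fin b → ℝ × ℝ) (k : ℕ) :
    padVec (Fin.append x y) (a + k) = padVec y k := by
  by_cases hk : k < b
  · simp only [padVec, dif_pos hk, dif_pos (Nat.add_lt_add_left hk a)]
    exact Fin.append_right x y ⟨k, hk⟩
  · simp only [padVec, dif_neg hk, dif_neg (by omega : ¬ a + k < a + b)]

lemma affProd_padVec_append_of_le (x : Fin a → ℝ × ℝ) (y : Fin b → ℝ × ℝ) {j : ℕ} (hj : j ≤ a) :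
    affProd (padVec (Fin.append x y)) j = affProd (padVec x) j :=
  affProd_congr fun _ hk => padVec_append_of_lt x y (hk.trans_le hj)

lemma affProd_padVec_append (x : Fin a → ℝ × ℝ) (y : Fin b → ℝ × ℝ) :
    affProd (padVec (Fin.append x y)) (a + b) = affProd (padVec x) a * affProd (padVec y) b := by
  rw [affProd_add, affProd_padVec_append_of_le x y le_rfl,
    affProd_congr fun k _ => padVec_append_add x y k]

lemma affComp_padVec_append (x : Fin a → ℝ × ℝ) (y : Fin b → ℝ × ℝ) (z : ℝ) :
    affComp (padVec (Fin.append x y)) (a + b) z =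
      affComp (padVec x) a (affComp (padVec y) b z) := by
  rw [affComp_add, affComp_congr fun k _ => padVec_append_add x y k,
    affComp_congr fun k hk => padVec_append_of_lt x y hk]

lemma measurable_padVec_apply (n k : ℕ) : Measurable fun v : Fin n → ℝ × ℝ => padVec v k := by
  unfold padVec
  split_ifs
  exacts [measurable_pi_apply _, measurable_const]

@[fun_prop]
lemma measurable_affProd_padVec (n j : ℕ) :
    Measurable fun v : Fin n → ℝ × ℝ => affProd (padVec v) j :=
  Finset.measurable_prod _ fun k _ => (measurable_padVec_apply n k).fst

@[fun_prop]
lemma measurable_affSum_padVec (n j : ℕ) :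
    Measurable fun v : Fin n → ℝ × ℝ => affSum (padVec v) j :=
  Finset.measurable_sum _ fun k _ =>
    (measurable_affProd_padVec n k).mul (measurable_padVec_apply n k).snd

end AffineWords

section FinAppend

variable {α : Type*} [MeasurableSpace α] (a b : ℕ)

def finAppendMeasurableEquiv : (Fin a → α) × (Fin b → α) ≃ᵐ (Fin (a + b) → α) :=
  (MeasurableEquiv.sumPiEquivProdPi fun _ : Fin a ⊕ Fin b => α).symm.trans
    (MeasurableEquiv.piCongrLeft (fun _ => α) finSumFinEquiv)

lemma coe_finAppendMeasurableEquiv :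
    ⇑(finAppendMeasurableEquiv (α := α) a b) = fun xy => Fin.append xy.1 xy.2 := by
  funext xy j
  refine Fin.addCases (fun l => ?_) (fun r => ?_) j
  · simp only [finAppendMeasurableEquiv, MeasurableEquiv.coe_trans, Function.comp_apply,
      MeasurableEquiv.coe_sumPiEquivProdPi_symm, MeasurableEquiv.coe_piCongrLeft, Fin.append_left]
    exact Equiv.piCongrLeft_sumInl (fun _ => α) finSumFinEquiv xy.1 xy.2 l
  · simp only [finAppendMeasurableEquiv, MeasurableEquiv.coe_trans, Function.comp_apply,
      MeasurableEquiv.coe_sumPiEquivProdPi_symm, MeasurableEquiv.coe_piCongrLeft, Fin.append_right]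
    exact Equiv.piCongrLeft_sumInr (fun _ => α) finSumFinEquiv xy.1 xy.2 r

lemma measurePreserving_finAppend (μ : Fin (a + b) → Measure α) [∀ k, SigmaFinite (μ k)] :
    MeasurePreserving (fun xy : (Fin a → α) × (Fin b → α) => Fin.append xy.1 xy.2)
      ((Measure.pi fun k => μ (Fin.castAdd b k)).prod (Measure.pi fun k => μ (Fin.natAdd a k)))
      (Measure.pi μ) := by
  rw [← coe_finAppendMeasurableEquiv]
  have h := (measurePreserving_piCongrLeft μ finSumFinEquiv).comp
    (measurePreserving_sumPiEquivProdPi_symm fun k => μ (finSumFinEquiv k))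
  simp only [finSumFinEquiv_apply_left, finSumFinEquiv_apply_right] at h
  exact h

end FinAppend

lemma measurable_sInf_setOf {α : Type*} [MeasurableSpace α] {Q : ℕ → α → Prop}
    (hQ : ∀ k, MeasurableSet {x | Q k x}) : Measurable fun x => sInf {k | Q k x} := by
  refine measurable_to_countable' fun n => ?_
  have hpre : (fun x => sInf {k | Q k x}) ⁻¹' {n} =
      {x | Q n x ∧ ∀ m < n, ¬ Q m x} ∪ {x | n = 0 ∧ ∀ m, ¬ Q m x} := by
    ext x
    simp only [Set.mem_preimage, Set.mem_singleton_iff, Set.mem_union, Set.mem_ofPred_eq]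
    constructor
    · rintro rfl
      by_cases hx : {k | Q k x}.Nonempty
      · exact Or.inl ⟨Nat.sInf_mem hx, fun m hm => Nat.notMem_of_lt_sInf hm⟩
      · rw [Set.not_nonempty_iff_eq_empty.mp hx, Nat.sInf_empty]
        exact Or.inr ⟨rfl, fun m hm => hx ⟨m, hm⟩⟩
    · rintro (⟨hn, hlt⟩ | ⟨rfl, hnone⟩)
      · exact le_antisymm (Nat.sInf_le hn)
          (not_lt.mp fun h => hlt _ h (Nat.sInf_mem (s := {k | Q k x}) ⟨n, hn⟩))
      · have hempty : {k | Q k x} = ∅ := Set.eq_empty_of_forall_notMem hnone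
        rw [hempty, Nat.sInf_empty]
  rw [hpre]
  measurability

lemma measurable_apply_of_nat {α β : Type*} [MeasurableSpace α] [MeasurableSpace β]
    {f : ℕ → α → β} (hf : ∀ n, Measurable (f n)) {t : α → ℕ} (ht : Measurable t) :
    Measurable fun x => f (t x) x :=
  (measurable_from_prod_countable_left (f := fun p : α × ℕ => f p.2 p.1) hf).comp
    (measurable_id.prodMk ht)

namespace MMSetting

variable {S : Type*} [MeasurableSpace S] [MeasurableSingletonClass S] [Countable S]
  {Ω : Type*} [MeasurableSpace Ω] (X : MMSetting S Ω)

section PathSpace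

instance isProbabilityMeasure_P (i : S) : IsProbabilityMeasure (X.P i) := X.prob i

instance isProbabilityMeasure_K (a b : S) : IsProbabilityMeasure (X.K a b) := X.Kprob a b

def cyl (γ : ℕ → S) (n : ℕ) : Set Ω := ⋂ k ∈ Finset.range (n + 1), {ω | X.M k ω = γ k}

def pathWeight (γ : ℕ → S) (n : ℕ) : ℝ≥0∞ := ∏ k ∈ Finset.range n, X.p (γ k) (γ (k + 1))

-- The law of `(A_k, B_k)_{k < n}` given that the chain follows `γ` up to time `n`.
def pathLaw (γ : ℕ → S) (n : ℕ) : Measure (Fin n → ℝ × ℝ) :=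
  Measure.pi fun k => X.K (γ k) (γ (k + 1))

def pairs (ω : Ω) (k : ℕ) : ℝ × ℝ := (X.A k ω, X.B k ω)

def pairVec (n : ℕ) (ω : Ω) : Fin n → ℝ × ℝ := fun k => X.pairs ω k

structure IsPath (γ : ℕ → S) (i j : S) (n : ℕ) : Prop where
  start : γ 0 = i
  last : γ n = j
  weight_ne_zero : X.pathWeight γ n ≠ 0

instance isProbabilityMeasure_pathLaw (γ : ℕ → S) (n : ℕ) :
    IsProbabilityMeasure (X.pathLaw γ n) := by
  unfold pathLaw
  infer_instance

variable {X} {i j l : S} {γ δ : ℕ → S} {n g d : ℕ}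

lemma mem_cyl {ω : Ω} : ω ∈ X.cyl γ n ↔ ∀ k ≤ n, X.M k ω = γ k := by
  simp [cyl]

lemma measurableSet_cyl (γ : ℕ → S) (n : ℕ) : MeasurableSet (X.cyl γ n) :=
  .biInter (Finset.range (n + 1)).countable_toSet fun k _ => X.measM k (measurableSet_singleton _)

lemma measurable_pairVec (n : ℕ) : Measurable (X.pairVec n) :=
  measurable_pi_lambda _ fun k => (X.measA k).prodMk (X.measB k)

lemma padVec_pairVec {k : ℕ} (hk : k < n) (ω : Ω) : padVec (X.pairVec n ω) k = X.pairs ω k := by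
  simp [padVec, pairVec, hk]

lemma affProd_padVec_pairVec {j : ℕ} (hj : j ≤ n) (ω : Ω) :
    affProd (padVec (X.pairVec n ω)) j = X.Pprod j ω :=
  affProd_congr (w' := X.pairs ω) fun _ hk => padVec_pairVec (hk.trans_le hj) ω

lemma affSum_padVec_pairVec {j : ℕ} (hj : j ≤ n) (ω : Ω) :
    affSum (padVec (X.pairVec n ω)) j = X.Ssum j ω :=
  affSum_congr (w' := X.pairs ω) fun _ hk => padVec_pairVec (hk.trans_le hj) ω

lemma ae_start (i : S) : ∀ᵐ ω ∂X.P i, X.M 0 ω = i :=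
  (ae_iff_prob_eq_one (measurableSet_setOfPred.mp (X.measM 0 (measurableSet_singleton i)))).mpr
    (X.start i)

lemma P_cyl (hγ : γ 0 = i) (n : ℕ) : X.P i (X.cyl γ n) = X.pathWeight γ n := X.chain i n γ hγ

lemma P_cyl_inter_pairVec_preimage_pi (hγ : γ 0 = i) {s : Fin n → Set (ℝ × ℝ)}
    (hs : ∀ k, MeasurableSet (s k)) :
    X.P i (X.cyl γ n ∩ X.pairVec n ⁻¹' Set.univ.pi s) =
      X.pathWeight γ n * ∏ k : Fin n, X.K (γ k) (γ (k + 1)) (s k) := by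
  set E : ℕ → Set (ℝ × ℝ) := fun k => if h : k < n then s ⟨k, h⟩ else Set.univ
  have hE : ∀ k, MeasurableSet (E k) := fun k => by
    unfold E
    split_ifs
    exacts [hs _, .univ]
  have hpre : X.pairVec n ⁻¹' Set.univ.pi s =
      ⋂ k ∈ Finset.range n, {ω | (X.A k ω, X.B k ω) ∈ E k} := by
    ext ω
    simp +contextual [E, pairVec, pairs, Fin.forall_iff]
  rw [hpre, cyl, X.modulated i n γ E hγ hE, X.chain i n γ hγ, pathWeight]
  congr 1
  rw [← Fin.prod_univ_eq_prod_range]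
  exact Finset.prod_congr rfl fun k _ => by simp [E]

lemma map_pairVec_restrict_cyl (hγ : γ 0 = i) (n : ℕ) :
    ((X.P i).restrict (X.cyl γ n)).map (X.pairVec n) = X.pathWeight γ n • X.pathLaw γ n := by
  by_cases hw : X.pathWeight γ n = 0
  · rw [hw, zero_smul, Measure.restrict_eq_zero.mpr (by rwa [P_cyl hγ]), Measure.map_zero]
  have hw' : X.pathWeight γ n ≠ ⊤ := by
    rw [← P_cyl hγ]
    exact measure_ne_top _ _
  have hpi : X.pathLaw γ n = (X.pathWeight γ n)⁻¹ •
      ((X.P i).restrict (X.cyl γ n)).map (X.pairVec n) :=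
    Measure.pi_eq fun s hs => by
      rw [Measure.smul_apply, Measure.map_apply (measurable_pairVec n) (.univ_pi hs),
        Measure.restrict_apply (measurable_pairVec n (.univ_pi hs)), Set.inter_comm,
        P_cyl_inter_pairVec_preimage_pi hγ hs, smul_eq_mul, ← mul_assoc,
        ENNReal.inv_mul_cancel hw hw', one_mul]
  rw [hpi, smul_smul, ENNReal.mul_inv_cancel hw hw', one_smul]

lemma ae_pathLaw_of_ae (hγ : γ 0 = i) (hw : X.pathWeight γ n ≠ 0)
    {Q : (Fin n → ℝ × ℝ) → Prop} (hQ : MeasurableSet {v | Q v})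
    (h : ∀ᵐ ω ∂X.P i, ω ∈ X.cyl γ n → Q (X.pairVec n ω)) : ∀ᵐ v ∂X.pathLaw γ n, Q v := by
  rwa [← Measure.ae_ennreal_smul_measure_iff hw, ← map_pairVec_restrict_cyl hγ,
    ae_map_iff (measurable_pairVec n).aemeasurable hQ, ae_restrict_iff' (measurableSet_cyl γ n)]

lemma ae_of_ae_pathLaw (hγ : γ 0 = i) {Q : (Fin n → ℝ × ℝ) → Prop}
    (h : X.pathWeight γ n ≠ 0 → ∀ᵐ v ∂X.pathLaw γ n, Q v) :
    ∀ᵐ ω ∂X.P i, ω ∈ X.cyl γ n → Q (X.pairVec n ω) := by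
  rw [← ae_restrict_iff' (measurableSet_cyl γ n)]
  refine ae_of_ae_map (measurable_pairVec n).aemeasurable ?_
  rw [map_pairVec_restrict_cyl hγ]
  by_cases hw : X.pathWeight γ n = 0
  · simp [hw]
  · exact (Measure.ae_ennreal_smul_measure_iff hw).mpr (h hw)

lemma ae_of_forall_cyl (n : ℕ) {Q : Ω → Prop}
    (h : ∀ γ : ℕ → S, γ 0 = i → ∀ᵐ ω ∂X.P i, ω ∈ X.cyl γ n → Q ω) : ∀ᵐ ω ∂X.P i, Q ω := by
  let path (q : Fin (n + 1) → S) (k : ℕ) : S := if hk : k < n + 1 then q ⟨k, hk⟩ else i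
  have hall : ∀ᵐ ω ∂X.P i, ∀ q, path q 0 = i → ω ∈ X.cyl (path q) n → Q ω :=
    ae_all_iff.mpr fun q => by
      by_cases hq : path q 0 = i
      · filter_upwards [h _ hq] with ω hω using fun _ => hω
      · exact .of_forall fun ω hq' => absurd hq' hq
  filter_upwards [hall, ae_start i] with ω hω h0
  exact hω (fun k => X.M k ω) (by simpa [path] using h0)
    (mem_cyl.mpr fun k hk => by simp only [path, dif_pos (show k < n + 1 by omega)])

lemma exists_isPath (i j : S) : ∃ n γ, X.IsPath γ i j n := by
  obtain ⟨n, hn⟩ := X.irreducible i j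
  by_contra! hno
  have hnot : ∀ᵐ ω ∂X.P i, ¬ X.M n ω = j := ae_of_forall_cyl n fun γ hγ => by
    by_cases hγn : γ n = j
    · have hnull : X.P i (X.cyl γ n) = 0 := by
        rw [P_cyl hγ]
        by_contra hw
        exact hno n γ ⟨hγ, hγn, hw⟩
      filter_upwards [measure_eq_zero_iff_ae_notMem.mp hnull] with ω hω hmem using absurd hmem hω
    · exact .of_forall fun ω hω => by rwa [mem_cyl.mp hω n le_rfl]
  exact hn.ne' (measure_eq_zero_iff_ae_notMem.mpr hnot)

lemma pathWeight_congr {γ' : ℕ → S} (h : ∀ k ≤ n, γ k = γ' k) :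
    X.pathWeight γ n = X.pathWeight γ' n :=
  Finset.prod_congr rfl fun k hk => by
    have hk := Finset.mem_range.mp hk
    rw [h k hk.le, h (k + 1) hk]

lemma pathLaw_congr {γ' : ℕ → S} (h : ∀ k ≤ n, γ k = γ' k) : X.pathLaw γ n = X.pathLaw γ' n := by
  unfold pathLaw
  congr 1
  funext k
  rw [h k k.isLt.le, h (k + 1) k.isLt]

lemma pathWeight_add (γ : ℕ → S) (a b : ℕ) :
    X.pathWeight γ (a + b) = X.pathWeight γ a * X.pathWeight (fun k => γ (a + k)) b := by
  simp only [pathWeight, Finset.prod_range_add, add_assoc]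

lemma pathLaw_add (γ : ℕ → S) (a b : ℕ) :
    X.pathLaw γ (a + b) = ((X.pathLaw γ a).prod (X.pathLaw (fun k => γ (a + k)) b)).map
      fun xy => Fin.append xy.1 xy.2 := by
  have h := (measurePreserving_finAppend a b fun k : Fin (a + b) => X.K (γ k) (γ (k + 1))).map_eq
  simpa [pathLaw, add_assoc] using h.symm

lemma ae_pathLaw_add_iff (γ : ℕ → S) (a b : ℕ) {Q : (Fin (a + b) → ℝ × ℝ) → Prop} :
    (∀ᵐ v ∂X.pathLaw γ (a + b), Q v) ↔
      ∀ᵐ xy ∂(X.pathLaw γ a).prod (X.pathLaw (fun k => γ (a + k)) b),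
        Q (Fin.append xy.1 xy.2) := by
  rw [pathLaw_add, ← coe_finAppendMeasurableEquiv,
    (finAppendMeasurableEquiv a b).measurableEmbedding.ae_map_iff]
  simp only [coe_finAppendMeasurableEquiv]

lemma ae_pathLaw_pathAppend_iff (h : δ 0 = γ g) {Q : (Fin (g + d) → ℝ × ℝ) → Prop} :
    (∀ᵐ v ∂X.pathLaw (pathAppend γ g δ) (g + d), Q v) ↔
      ∀ᵐ xy ∂(X.pathLaw γ g).prod (X.pathLaw δ d), Q (Fin.append xy.1 xy.2) := by
  rw [ae_pathLaw_add_iff, pathLaw_congr fun k hk => pathAppend_of_le h hk,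
    pathLaw_congr fun k _ => pathAppend_add γ g δ k]

lemma IsPath.append (hγ : X.IsPath γ i j g) (hδ : X.IsPath δ j l d) :
    X.IsPath (pathAppend γ g δ) i l (g + d) := by
  have h : δ 0 = γ g := hδ.start.trans hγ.last.symm
  refine ⟨?_, ?_, ?_⟩
  · rw [pathAppend_of_le h (Nat.zero_le g), hγ.start]
  · rw [pathAppend_add, hδ.last]
  · rw [pathWeight_add, pathWeight_congr fun k hk => pathAppend_of_le h hk,
      pathWeight_congr fun k _ => pathAppend_add γ g δ k]
    exact mul_ne_zero hγ.weight_ne_zero hδ.weight_ne_zero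

lemma IsPath.split (h : X.IsPath γ i l (g + d)) (hg : γ g = j) :
    X.IsPath γ i j g ∧ X.IsPath (fun k => γ (g + k)) j l d := by
  have hw := h.weight_ne_zero
  rw [pathWeight_add] at hw
  exact ⟨⟨h.start, hg, left_ne_zero_of_mul hw⟩, ⟨hg, h.last, right_ne_zero_of_mul hw⟩⟩

lemma isPath_edge {a b : S} (hp : X.p a b ≠ 0) : X.IsPath (edge a b) a b 1 :=
  ⟨rfl, rfl, by simpa [pathWeight, edge] using hp⟩

lemma IsPath.p_ne_zero (h : X.IsPath γ i j n) {k : ℕ} (hk : k < n) :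
    X.p (γ k) (γ (k + 1)) ≠ 0 :=
  fun h0 => h.weight_ne_zero (Finset.prod_eq_zero (Finset.mem_range.mpr hk) h0)

lemma ae_pathLaw_apply_of_ae (k : Fin n) {Q : ℝ × ℝ → Prop}
    (h : ∀ᵐ q ∂X.K (γ k) (γ (k + 1)), Q q) : ∀ᵐ v ∂X.pathLaw γ n, Q (v k) :=
  (measurePreserving_eval _ k).quasiMeasurePreserving.ae h

lemma ae_of_ae_pathLaw_apply (k : Fin n) {Q : ℝ × ℝ → Prop} (hQ : MeasurableSet {q | Q q})
    (h : ∀ᵐ v ∂X.pathLaw γ n, Q (v k)) : ∀ᵐ q ∂X.K (γ k) (γ (k + 1)), Q q := by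
  rw [← (measurePreserving_eval (fun k : Fin n => X.K (γ k) (γ (k + 1))) k).map_eq]
  exact (ae_map_iff (μ := X.pathLaw γ n) (measurable_pi_apply k).aemeasurable hQ).mpr h

end PathSpace

section Degeneracy

variable {X}

lemma ae_Pπ_iff {Q : Ω → Prop} : (∀ᵐ ω ∂X.Pπ, Q ω) ↔ ∀ a, ∀ᵐ ω ∂X.P a, Q ω := by
  simp only [Pπ, Measure.ae_sum_iff, Measure.ae_ennreal_smul_measure_iff (X.πpos _).ne']

lemma ae_K_of_ae_P {a b : S} (hp : X.p a b ≠ 0) {Q : ℝ × ℝ → Prop} (hQ : MeasurableSet {q | Q q})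
    (h : ∀ᵐ ω ∂X.P a, X.M 1 ω = b → Q (X.pairs ω 0)) : ∀ᵐ q ∂X.K a b, Q q := by
  have hpath : ∀ᵐ v ∂X.pathLaw (edge a b) 1, Q (v 0) :=
    ae_pathLaw_of_ae rfl (isPath_edge hp).weight_ne_zero (measurable_pi_apply 0 hQ) <|
      h.mono fun ω hω hcyl => hω (mem_cyl.mp hcyl 1 le_rfl)
  simpa [edge] using ae_of_ae_pathLaw_apply 0 hQ hpath

lemma ae_step_of_ae_K {Q : S → S → ℝ × ℝ → Prop}
    (h : ∀ a b, X.p a b ≠ 0 → ∀ᵐ q ∂X.K a b, Q a b q) (i : S) (n : ℕ) :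
    ∀ᵐ ω ∂X.P i, Q (X.M n ω) (X.M (n + 1) ω) (X.pairs ω n) := by
  refine ae_of_forall_cyl (n + 1) fun γ hγ => ?_
  have hn : n < n + 1 := n.lt_succ_self
  filter_upwards [ae_of_ae_pathLaw hγ fun hw => ae_pathLaw_apply_of_ae ⟨n, hn⟩
    (h _ _ ((⟨hγ, rfl, hw⟩ : X.IsPath γ i _ _).p_ne_zero hn))] with ω hω hcyl
  rw [mem_cyl.mp hcyl n hn.le, mem_cyl.mp hcyl (n + 1) le_rfl]
  exact hω hcyl

lemma degenD_iff_ae_K (c : S → ℝ) :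
    X.DegenD c ↔ ∀ a b, X.p a b ≠ 0 → ∀ᵐ q ∂X.K a b, q.1 * c b + q.2 = c a := by
  refine ⟨fun hc a b hp => ?_, fun h => ae_Pπ_iff.mpr (ae_step_of_ae_K h · 0)⟩
  refine ae_K_of_ae_P hp (measurableSet_eq_fun (by fun_prop) measurable_const) ?_
  filter_upwards [ae_Pπ_iff.mp hc a, ae_start a] with ω hω h0 h1
  rw [← h0, ← h1]
  exact hω

lemma affComp_pairs_eq_of_degenerate {c : S → ℝ} {ω : Ω}
    (h : ∀ n, X.A n ω * c (X.M (n + 1) ω) + X.B n ω = c (X.M n ω)) (n : ℕ) :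
    affComp (X.pairs ω) n (c (X.M n ω)) = c (X.M 0 ω) := by
  induction n with
  | zero => simp
  | succ n ih => rw [affComp_succ, pairs, h n, ih]

lemma Ssum_hatτ_eq_zero_of_degenerate {c : S → ℝ} {i : S} {ω : Ω} (h0 : X.M 0 ω = i)
    (h : ∀ n, X.A n ω * c (X.M (n + 1) ω) + X.B n ω = c (X.M n ω)) :
    X.Ssum (X.hatτ i ω) ω = 0 := by
  by_cases hne : {k | 0 < k ∧ X.M k ω = i ∧ X.Pprod k ω = 1}.Nonempty
  · obtain ⟨-, hM, hP⟩ : X.hatτ i ω ∈ {k | 0 < k ∧ X.M k ω = i ∧ X.Pprod k ω = 1} :=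
      Nat.sInf_mem hne
    have key := affComp_pairs_eq_of_degenerate h (X.hatτ i ω)
    rw [hM, h0, affComp] at key
    change X.Pprod _ ω * c i + X.Ssum _ ω = c i at key
    rw [hP] at key
    linarith
  · rw [hatτ, Set.not_nonempty_iff_eq_empty.mp hne, Nat.sInf_empty]
    simp [Ssum]

lemma ae_Ssum_hatτ_eq_zero_of_degenD {c : S → ℝ} (hc : X.DegenD c) (i : S) :
    ∀ᵐ ω ∂X.P i, X.Ssum (X.hatτ i ω) ω = 0 := by
  filter_upwards [ae_all_iff.mpr (ae_step_of_ae_K ((degenD_iff_ae_K c).mp hc) i), ae_start i]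
    with ω hω h0
  exact Ssum_hatτ_eq_zero_of_degenerate h0 hω

end Degeneracy

section Measurability

lemma measurable_Pprod (n : ℕ) : Measurable (X.Pprod n) :=
  Finset.measurable_prod _ fun k _ => X.measA k

lemma measurable_Ssum (n : ℕ) : Measurable (X.Ssum n) :=
  Finset.measurable_sum _ fun k _ => (X.measurable_Pprod k).mul (X.measB k)

lemma measurable_tau_one (i : S) : Measurable (X.tau i 1) :=
  measurable_sInf_setOf fun k => (MeasurableSet.const (0 < k)).inter (X.measM k (.singleton i))

lemma measurable_hatτ (i : S) : Measurable (X.hatτ i) :=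
  measurable_sInf_setOf fun k => (MeasurableSet.const (0 < k)).inter
    ((X.measM k (.singleton i)).inter (X.measurable_Pprod k (.singleton 1)))

lemma measurable_abs_Ai_eq_one (i : S) : Measurable fun ω => |X.Ai i ω| = 1 :=
  measurableSet_setOfPred.mp <|
    (measurable_apply_of_nat X.measurable_Pprod (X.measurable_tau_one i)).abs (.singleton 1)

lemma measurable_Ssum_hatτ_eq_zero (i : S) : Measurable fun ω => X.Ssum (X.hatτ i ω) ω = 0 :=
  measurableSet_setOfPred.mp <|
    measurable_apply_of_nat X.measurable_Ssum (X.measurable_hatτ i) (.singleton 0)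

end Measurability

section Converse

structure IsFirstReturn (γ : ℕ → S) (i : S) (n : ℕ) : Prop extends X.IsPath γ i i n where
  pos : 0 < n
  ne : ∀ k, 0 < k → k < n → γ k ≠ i

variable {X} {i j : S} {γ : ℕ → S} {n : ℕ}

lemma IsPath.exists_firstReturn (hγ : X.IsPath γ i i n) (hn : 0 < n) :
    ∃ t d, n = t + d ∧ X.IsFirstReturn γ i t ∧ X.IsPath (fun k => γ (t + k)) i i d := by
  classical
  have hex : ∃ k, 0 < k ∧ γ k = i := ⟨n, hn, hγ.last⟩
  obtain ⟨hpos, hret⟩ := Nat.find_spec hex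
  have hle : Nat.find hex ≤ n := Nat.find_min' hex ⟨hn, hγ.last⟩
  obtain ⟨hfirst, hrest⟩ := (show X.IsPath γ i i (Nat.find hex + (n - Nat.find hex)) by
    rwa [Nat.add_sub_cancel' hle]).split hret
  exact ⟨_, _, (Nat.add_sub_cancel' hle).symm,
    { hfirst with pos := hpos, ne := fun k hk hkt hki => Nat.find_min hex hkt ⟨hk, hki⟩ }, hrest⟩

lemma ae_K_fst_ne_zero (hA : X.Pπ {ω | X.A 0 ω = 0} = 0) {a b : S} (hp : X.p a b ≠ 0) :
    ∀ᵐ q ∂X.K a b, q.1 ≠ 0 :=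
  ae_K_of_ae_P hp (measurable_fst (measurableSet_singleton 0)).compl <|
    (ae_Pπ_iff.mp (measure_eq_zero_iff_ae_notMem.mp hA) a).mono fun _ hω _ => hω

lemma IsPath.ae_affProd_ne_zero (hA : X.Pπ {ω | X.A 0 ω = 0} = 0) (hγ : X.IsPath γ i j n) :
    ∀ᵐ v ∂X.pathLaw γ n, affProd (padVec v) n ≠ 0 := by
  filter_upwards [ae_all_iff.mpr fun k : Fin n =>
    ae_pathLaw_apply_of_ae k (ae_K_fst_ne_zero hA (hγ.p_ne_zero k.isLt))] with v hv
  exact Finset.prod_ne_zero_iff.mpr fun k hk => by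
    simpa [padVec, Finset.mem_range.mp hk] using hv ⟨k, Finset.mem_range.mp hk⟩

lemma IsFirstReturn.tau_one_eq (h : X.IsFirstReturn γ i n) {ω : Ω} (hω : ω ∈ X.cyl γ n) :
    X.tau i 1 ω = n := by
  have hmem : n ∈ {k | 0 < k ∧ X.M k ω = i} := ⟨h.pos, (mem_cyl.mp hω n le_rfl).trans h.last⟩
  refine le_antisymm (Nat.sInf_le hmem) (not_lt.mp fun hlt => ?_)
  obtain ⟨hpos, hM⟩ : X.tau i 1 ω ∈ {k | 0 < k ∧ X.M k ω = i} := Nat.sInf_mem ⟨n, hmem⟩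
  exact h.ne _ hpos hlt ((mem_cyl.mp hω _ hlt.le).symm.trans hM)

lemma hatτ_eq_of_mem_cyl (hγ : γ n = i) (hn : 0 < n) {ω : Ω} (hω : ω ∈ X.cyl γ n)
    (hP : X.Pprod n ω = 1) (hmin : ∀ k, 0 < k → k < n → γ k = i → X.Pprod k ω ≠ 1) :
    X.hatτ i ω = n := by
  have hmem : n ∈ {k | 0 < k ∧ X.M k ω = i ∧ X.Pprod k ω = 1} :=
    ⟨hn, (mem_cyl.mp hω n le_rfl).trans hγ, hP⟩
  refine le_antisymm (Nat.sInf_le hmem) (not_lt.mp fun hlt => ?_)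
  obtain ⟨hpos, hM, hP'⟩ : X.hatτ i ω ∈ {k | 0 < k ∧ X.M k ω = i ∧ X.Pprod k ω = 1} :=
    Nat.sInf_mem ⟨n, hmem⟩
  exact hmin _ hpos hlt ((mem_cyl.mp hω _ hlt.le).symm.trans hM) hP'

lemma IsFirstReturn.ae_abs_affProd (hAi : ∀ᵐ ω ∂X.P i, |X.Ai i ω| = 1)
    (h : X.IsFirstReturn γ i n) : ∀ᵐ v ∂X.pathLaw γ n, |affProd (padVec v) n| = 1 :=
  ae_pathLaw_of_ae h.start h.weight_ne_zero
    ((measurable_affProd_padVec n n).abs (measurableSet_singleton 1)) <|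
    hAi.mono fun ω hω hcyl => by
      rwa [affProd_padVec_pairVec le_rfl, ← h.tau_one_eq hcyl]

lemma IsPath.ae_affSum_eq_zero (hS : ∀ᵐ ω ∂X.P i, X.Ssum (X.hatτ i ω) ω = 0)
    (hγ : X.IsPath γ i i n) :
    ∀ᵐ v ∂X.pathLaw γ n, (∀ k, 0 < k → k < n → γ k = i → affProd (padVec v) k ≠ 1) →
      affProd (padVec v) n = 1 → affSum (padVec v) n = 0 := by
  rcases n.eq_zero_or_pos with rfl | hn
  · exact .of_forall fun v _ _ => affSum_zero _
  refine ae_pathLaw_of_ae hγ.start hγ.weight_ne_zero (measurableSet_setOfPred.mpr (by fun_prop)) <|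
    hS.mono fun ω hω hcyl hmin hP => ?_
  rw [affProd_padVec_pairVec le_rfl] at hP
  rwa [affSum_padVec_pairVec le_rfl, ← hatτ_eq_of_mem_cyl hγ.last hn hcyl hP
    fun k hk hkn hki => by simpa [affProd_padVec_pairVec hkn.le] using hmin k hk hkn hki]

lemma IsFirstReturn.ae_affSum_eq_of_pair (hS : ∀ᵐ ω ∂X.P i, X.Ssum (X.hatτ i ω) ω = 0)
    {γ₁ γ₂ : ℕ → S} {n₁ n₂ : ℕ} (h₁ : X.IsFirstReturn γ₁ i n₁) (h₂ : X.IsFirstReturn γ₂ i n₂) :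
    ∀ᵐ xy ∂(X.pathLaw γ₁ n₁).prod (X.pathLaw γ₂ n₂),
      affProd (padVec xy.1) n₁ = -1 → affProd (padVec xy.2) n₂ = -1 →
        affSum (padVec xy.1) n₁ = affSum (padVec xy.2) n₂ := by
  -- The concatenated loop first returns to `i` with slope `1` at its end, where `B̂ = 0`.
  have hjoin := (h₁.append h₂.toIsPath).ae_affSum_eq_zero hS
  rw [ae_pathLaw_pathAppend_iff (h₂.start.trans h₁.last.symm)] at hjoin
  filter_upwards [hjoin] with ⟨x, y⟩ hxy hx hy
  have hsum := hxy (fun k hk hkn hki => ?_) (by rw [affProd_padVec_append, hx, hy]; norm_num)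
  · rw [← affComp_zero_right, affComp_padVec_append, affComp_zero_right, affComp, hx] at hsum
    linarith
  · rcases lt_trichotomy k n₁ with hlt | rfl | hgt
    · rw [pathAppend_of_le (h₂.start.trans h₁.last.symm) hlt.le] at hki
      exact absurd hki (h₁.ne k hk hlt)
    · rw [affProd_padVec_append_of_le x y le_rfl, hx]
      norm_num
    · obtain ⟨m, rfl⟩ := Nat.exists_eq_add_of_lt hgt
      rw [add_assoc, pathAppend_add] at hki
      exact absurd hki (h₂.ne _ (by omega) (by omega))

lemma exists_affSum_eq_of_affProd_eq_neg_one (hS : ∀ᵐ ω ∂X.P i, X.Ssum (X.hatτ i ω) ω = 0) :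
    ∃ b : ℝ, ∀ γ n, X.IsFirstReturn γ i n →
      ∀ᵐ v ∂X.pathLaw γ n, affProd (padVec v) n = -1 → affSum (padVec v) n = b := by
  by_cases hex : ∃ γ₁ n₁, X.IsFirstReturn γ₁ i n₁ ∧
      ∃ᵐ v ∂X.pathLaw γ₁ n₁, affProd (padVec v) n₁ = -1
  · obtain ⟨γ₁, n₁, h₁, hfreq⟩ := hex
    obtain ⟨x₀, hx₀, hgood⟩ :=
      (hfreq.and_eventually (Measure.ae_ae_of_ae_prod (h₁.ae_affSum_eq_of_pair hS h₁))).exists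
    refine ⟨affSum (padVec x₀) n₁, fun γ n h => ?_⟩
    have hb : ∃ᵐ x ∂X.pathLaw γ₁ n₁,
        affProd (padVec x) n₁ = -1 ∧ affSum (padVec x) n₁ = affSum (padVec x₀) n₁ :=
      (hfreq.and_eventually hgood).mono fun x hx => ⟨hx.1, (hx.2 hx₀ hx.1).symm⟩
    obtain ⟨x, ⟨hx, hxb⟩, hxy⟩ :=
      (hb.and_eventually (Measure.ae_ae_of_ae_prod (h₁.ae_affSum_eq_of_pair hS h))).exists
    filter_upwards [hxy] with y hy hy1
    rw [← hy hx hy1, hxb]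
  · simp only [not_exists, not_and, Filter.not_frequently] at hex
    exact ⟨0, fun γ n h => (hex γ n h).mono fun v hv hv' => absurd hv' hv⟩

lemma IsFirstReturn.ae_affComp_eq (hAi : ∀ᵐ ω ∂X.P i, |X.Ai i ω| = 1)
    (hS : ∀ᵐ ω ∂X.P i, X.Ssum (X.hatτ i ω) ω = 0) {b : ℝ}
    (hb : ∀ γ n, X.IsFirstReturn γ i n →
      ∀ᵐ v ∂X.pathLaw γ n, affProd (padVec v) n = -1 → affSum (padVec v) n = b)
    (h : X.IsFirstReturn γ i n) :
    ∀ᵐ v ∂X.pathLaw γ n, affComp (padVec v) n (b / 2) = b / 2 := by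
  filter_upwards [h.ae_abs_affProd hAi, h.ae_affSum_eq_zero hS, hb γ n h] with v habs h1 hm1
  rcases (abs_eq zero_le_one).mp habs with hP | hP
  · rw [affComp, hP, h1 (fun k hk hkn hki => absurd hki (h.ne k hk hkn)) hP]
    ring
  · rw [affComp, hP, hm1 hP]
    ring

lemma IsPath.ae_affComp_eq (hAi : ∀ᵐ ω ∂X.P i, |X.Ai i ω| = 1)
    (hS : ∀ᵐ ω ∂X.P i, X.Ssum (X.hatτ i ω) ω = 0) {b : ℝ}
    (hb : ∀ γ n, X.IsFirstReturn γ i n →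
      ∀ᵐ v ∂X.pathLaw γ n, affProd (padVec v) n = -1 → affSum (padVec v) n = b) (n : ℕ) :
    ∀ γ, X.IsPath γ i i n → ∀ᵐ v ∂X.pathLaw γ n, affComp (padVec v) n (b / 2) = b / 2 := by
  induction n using Nat.strong_induction_on with
  | _ n ih =>
  intro γ hγ
  rcases n.eq_zero_or_pos with rfl | hn
  · exact .of_forall fun v => affComp_zero _ _
  obtain ⟨t, d, rfl, hfirst, hrest⟩ := hγ.exists_firstReturn hn
  rw [ae_pathLaw_add_iff]
  filter_upwards [Measure.quasiMeasurePreserving_fst.ae (hfirst.ae_affComp_eq hAi hS hb),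
    Measure.quasiMeasurePreserving_snd.ae (ih d (by have := hfirst.pos; omega) _ hrest)]
    with xy hx hy
  rw [affComp_padVec_append, hy, hx]

lemma exists_affComp_eq_of_loops (hA : X.Pπ {ω | X.A 0 ω = 0} = 0) {c₀ : ℝ}
    (hloop : ∀ n γ, X.IsPath γ i i n → ∀ᵐ v ∂X.pathLaw γ n, affComp (padVec v) n c₀ = c₀)
    (j : S) : ∃ r, ∀ g γ, X.IsPath γ i j g → ∀ᵐ v ∂X.pathLaw γ g, affComp (padVec v) g r = c₀ := by
  obtain ⟨d, δ, hδ⟩ := X.exists_isPath j i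
  have key : ∀ g γ, X.IsPath γ i j g → ∀ᵐ x ∂X.pathLaw γ g, ∀ᵐ y ∂X.pathLaw δ d,
      affComp (padVec x) g (affComp (padVec y) d c₀) = c₀ := fun g γ hγ => by
    have h := hloop _ _ (hγ.append hδ)
    rw [ae_pathLaw_pathAppend_iff (hδ.start.trans hγ.last.symm)] at h
    simpa only [affComp_padVec_append] using Measure.ae_ae_of_ae_prod h
  obtain ⟨g₀, γ₀, hγ₀⟩ := X.exists_isPath i j
  obtain ⟨x₀, hx₀, hx₀ne⟩ := ((key g₀ γ₀ hγ₀).and (hγ₀.ae_affProd_ne_zero hA)).exists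
  -- The return map along `δ` is a.s. constant, as its composite with an injective map is `c₀`.
  obtain ⟨y₀, hy₀⟩ := hx₀.exists
  have hconst : ∀ᵐ y ∂X.pathLaw δ d, affComp (padVec y) d c₀ = affComp (padVec y₀) d c₀ :=
    hx₀.mono fun y hy => affComp_injective hx₀ne (hy.trans hy₀.symm)
  refine ⟨affComp (padVec y₀) d c₀, fun g γ hγ => ?_⟩
  filter_upwards [key g γ hγ] with x hx
  obtain ⟨y, hy, hyc⟩ := (hx.and hconst).exists
  rwa [hyc] at hy

lemma exists_ae_K_degenerate (hA : X.Pπ {ω | X.A 0 ω = 0} = 0) {c₀ : ℝ}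
    (hfix : ∀ j, ∃ r, ∀ g γ, X.IsPath γ i j g →
      ∀ᵐ v ∂X.pathLaw γ g, affComp (padVec v) g r = c₀) :
    ∃ c : S → ℝ, ∀ a b, X.p a b ≠ 0 → ∀ᵐ q ∂X.K a b, q.1 * c b + q.2 = c a := by
  choose c hc using hfix
  refine ⟨c, fun a b hp => ?_⟩
  obtain ⟨g, γ, hγ⟩ := X.exists_isPath i a
  have h := hc b _ _ (hγ.append (isPath_edge hp))
  rw [ae_pathLaw_pathAppend_iff ((isPath_edge hp).start.trans hγ.last.symm)] at h
  obtain ⟨x, ⟨hx, hxa⟩, hxne⟩ :=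
    (((Measure.ae_ae_of_ae_prod h).and (hc a g γ hγ)).and (hγ.ae_affProd_ne_zero hA)).exists
  have hy : ∀ᵐ y ∂X.pathLaw (edge a b) 1, (y 0).1 * c b + (y 0).2 = c a := by
    filter_upwards [hx] with y hy
    rw [affComp_padVec_append, ← hxa] at hy
    simpa [affComp, affProd, affSum, padVec] using affComp_injective hxne hy
  simpa [edge] using ae_of_ae_pathLaw_apply (Q := fun q => q.1 * c b + q.2 = c a) 0
    (measurableSet_eq_fun (by fun_prop) measurable_const) hy

lemma exists_degenD_of_ae_Ssum_hatτ_eq_zero (hA : X.Pπ {ω | X.A 0 ω = 0} = 0)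
    (hAi : ∀ᵐ ω ∂X.P i, |X.Ai i ω| = 1) (hS : ∀ᵐ ω ∂X.P i, X.Ssum (X.hatτ i ω) ω = 0) :
    ∃ c, X.DegenD c := by
  obtain ⟨b, hb⟩ := exists_affSum_eq_of_affProd_eq_neg_one hS
  obtain ⟨c, hc⟩ := exists_ae_K_degenerate hA
    (exists_affComp_eq_of_loops hA (IsPath.ae_affComp_eq hAi hS hb))
  exact ⟨c, (degenD_iff_ae_K c).mpr hc⟩

end Converse

end MMSetting

end Perpetuities

namespace Perpetuities

open MMSetting

theorem degeneracy_iff_hat_additive_part_vanishes_general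
    {S : Type*} [MeasurableSpace S] [MeasurableSingletonClass S] [Countable S]
    {Ω : Type*} [MeasurableSpace Ω] (X : MMSetting S Ω)
    (hA : X.Pπ {ω | X.A 0 ω = 0} = 0)
    (i : S) (hAi : X.P i {ω | |X.Ai i ω| = 1} = 1) :
    (∃ c : S → ℝ, X.DegenD c) ↔ X.P i {ω | X.Ssum (X.hatτ i ω) ω = 0} = 1 := by
  rw [← ae_iff_prob_eq_one (X.measurable_abs_Ai_eq_one i)] at hAi
  rw [← ae_iff_prob_eq_one (X.measurable_Ssum_hatτ_eq_zero i)]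
  exact ⟨fun ⟨c, hc⟩ => ae_Ssum_hatτ_eq_zero_of_degenD hc i,
    exists_degenD_of_ae_Ssum_hatτ_eq_zero hA hAi⟩

/-- **Lemma 6.2**. In the Markov-modulated setting with `P_π(A_1 = 0) = 0` and
`P_π(B_1 = 0) < 1`, fix `i ∈ S` and suppose `P_i(|A_1^i| = 1) = 1`. Then the degeneracy
condition (D) holds if and only if `P_i(B̂_1^i = 0) = 1`, where
`B̂_1^i = ∑_{k=1}^{τ̂(i)} Π_{k-1} B_k` and `τ̂(i)` is the first time `k ≥ 1` at which
`M_k = i` and `Π_k = 1`. -/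
theorem degeneracy_iff_hat_additive_part_vanishes
    {S : Type*} [MeasurableSpace S] [MeasurableSingletonClass S] [Countable S] [Nontrivial S]
    {Ω : Type*} [MeasurableSpace Ω] (X : MMSetting S Ω)
    (hA : X.Pπ {ω | X.A 0 ω = 0} = 0) (hB : X.Pπ {ω | X.B 0 ω = 0} < 1)
    (i : S) (hAi : X.P i {ω | |X.Ai i ω| = 1} = 1) :
    (∃ c : S → ℝ, X.DegenD c) ↔ X.P i {ω | X.Ssum (X.hatτ i ω) ω = 0} = 1 :=
  degeneracy_iff_hat_additive_part_vanishes_general X hA i hAi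

end Perpetuities
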